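/- arXiv:0803.4231 — 7 statements merged into one kernel-verified Lean document; each statement's English description precedes it below -/
import Mathlib

section
/- Suppose F = fromBlocks(F',0,U,F'') ∈ M_{(s'+s'')×(t'+t'')}(A) is admissible. Then for every row vector Y' ∈ A^{t'}, Y' lies in the image of the map ·F' : A^{s'} → A^{t'} if and only if there exists a row vector X ∈ A^{s'+s''} with X·F = (Y', 0). (In the notation of the paper: the image of f' equals (image of f) ∩ N'.) -/
open Matrix

theorem vecMul_fromBlocks_zero_eq_sumElim_iff {m' m'' n' n'' R : Type*} [Fintype m'] [Fintype m'']
    [NonUnitalNonAssocSemiring R] (F' : Matrix m' n' R) (U : Matrix m'' n' R)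
    (F'' : Matrix m'' n'' R) (X : m' ⊕ m'' → R) (Y' : n' → R) (Y'' : n'' → R) :
    X ᵥ* fromBlocks F' 0 U F'' = Sum.elim Y' Y'' ↔
      (X ∘ Sum.inl) ᵥ* F' + (X ∘ Sum.inr) ᵥ* U = Y' ∧ (X ∘ Sum.inr) ᵥ* F'' = Y'' := by
  rw [vecMul_fromBlocks, vecMul_zero, zero_add, Sum.elim_eq_iff]

/-- For an admissible block lower-triangular matrix
`F = fromBlocks F' 0 U F''`, a row vector `Y'` lies in the image of `·F'`
iff `(Y', 0)` lies in the image of `·F`. -/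
theorem image_block_left {A : Type*} [Ring A] {s' s'' t' t'' : ℕ}
    (F' : Matrix (Fin s') (Fin t') A) (U : Matrix (Fin s'') (Fin t') A)
    (F'' : Matrix (Fin s'') (Fin t'') A)
    (hadm : ∀ X'' : Fin s'' → A, ∃ X' : Fin s' → A,
      Matrix.vecMul X'' U = Matrix.vecMul X' F')
    (Y' : Fin t' → A) :
    (∃ X' : Fin s' → A, Matrix.vecMul X' F' = Y') ↔
      (∃ X : Fin s' ⊕ Fin s'' → A,
        Matrix.vecMul X (Matrix.fromBlocks F' 0 U F'') = Sum.elim Y' 0) := by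
  constructor
  · rintro ⟨X', rfl⟩
    refine ⟨Sum.elim X' 0, (vecMul_fromBlocks_zero_eq_sumElim_iff ..).2 ?_⟩
    simp only [Sum.elim_comp_inl, Sum.elim_comp_inr, zero_vecMul, add_zero, and_self]
  · rintro ⟨X, hX⟩
    obtain ⟨hY', -⟩ := (vecMul_fromBlocks_zero_eq_sumElim_iff ..).1 hX
    -- admissibility moves the contribution `(X ∘ Sum.inr) ᵥ* U` of the lower rows into the image of `F'`
    obtain ⟨Z, hZ⟩ := hadm (X ∘ Sum.inr)
    exact ⟨X ∘ Sum.inl + Z, by rw [add_vecMul, ← hZ, hY']⟩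
end

section
/- Let F = fromBlocks(F',0,U,F'') ∈ M_{(s'+s'')×(t'+t'')}(A) and G = fromBlocks(G',0,V,G'') ∈ M_{(t'+t'')×(u'+u'')}(A) both be admissible, and suppose the pair of maps (·F : A^{s'+s''} → A^{t'+t''}, ·G : A^{t'+t''} → A^{u'+u''}) is exact. Then every row vector Y'' ∈ A^{t''} with Y''·G'' = 0 also satisfies Y''·V = 0; consequently (0,Y'')·G = 0. (In the notation of the paper: the kernel of g'' equals (kernel of g) ∩ N''.) -/
/-!
Admissibility of `G` completes `Y''` to a kernel vector `(-Y', Y'')` of `·G`, where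
`Y'' V = Y' G'`. By exactness this vector lies in the image of `·F`, and admissibility of `F`
puts the first components of that image inside the image of `·F'`, so `-Y' = W F'` for some `W`.
Exactness also forces `F' G' = 0`, whence `Y'' V = Y' G' = -W F' G' = 0`.
-/

open Matrix

namespace Matrix

variable {A : Type*} [Semiring A] {m' m'' n' n'' p' p'' : Type*} [Fintype m'] [Fintype m'']

theorem sumElim_vecMul_fromBlocks_zero (X' : m' → A) (X'' : m'' → A) (F' : Matrix m' n' A)
    (U : Matrix m'' n' A) (F'' : Matrix m'' n'' A) :
    Sum.elim X' X'' ᵥ* fromBlocks F' 0 U F'' = Sum.elim (X' ᵥ* F' + X'' ᵥ* U) (X'' ᵥ* F'') := by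
  simp [vecMul_fromBlocks]

theorem exists_vecMul_fromBlocks_comp_inl {F' : Matrix m' n' A} {U : Matrix m'' n' A}
    (F'' : Matrix m'' n'' A) (hadm : ∀ X'' : m'' → A, ∃ X' : m' → A, X'' ᵥ* U = X' ᵥ* F')
    (X : m' ⊕ m'' → A) : ∃ W : m' → A, (X ᵥ* fromBlocks F' 0 U F'') ∘ Sum.inl = W ᵥ* F' := by
  obtain ⟨Z', hZ'⟩ := hadm (X ∘ Sum.inr)
  refine ⟨X ∘ Sum.inl + Z', ?_⟩
  rw [vecMul_fromBlocks, Sum.elim_comp_inl, hZ', add_vecMul]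

theorem vecMul_vecMul_eq_zero_of_fromBlocks [Fintype n'] [Fintype n''] {F' : Matrix m' n' A}
    {U : Matrix m'' n' A} {F'' : Matrix m'' n'' A} {G' : Matrix n' p' A} {V : Matrix n'' p' A}
    {G'' : Matrix n'' p'' A}
    (h : ∀ X : m' ⊕ m'' → A, X ᵥ* fromBlocks F' 0 U F'' ᵥ* fromBlocks G' 0 V G'' = 0)
    (W : m' → A) : W ᵥ* F' ᵥ* G' = 0 := by
  have := congr_arg (· ∘ Sum.inl) (h (Sum.elim W 0))
  simpa [sumElim_vecMul_fromBlocks_zero] using this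

end Matrix

/-- if `F = fromBlocks F' 0 U F''` and `G = fromBlocks G' 0 V G''`
are admissible and the pair `(·F, ·G)` is exact, then any `Y''` with
`Y'' · G'' = 0` also satisfies `Y'' · V = 0`, hence `(0, Y'') · G = 0`. -/
theorem ker_block_right {A : Type*} [Ring A] {s' s'' t' t'' u' u'' : ℕ}
    (F' : Matrix (Fin s') (Fin t') A) (U : Matrix (Fin s'') (Fin t') A)
    (F'' : Matrix (Fin s'') (Fin t'') A)
    (G' : Matrix (Fin t') (Fin u') A) (V : Matrix (Fin t'') (Fin u') A)
    (G'' : Matrix (Fin t'') (Fin u'') A)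
    (hadmF : ∀ X'' : Fin s'' → A, ∃ X' : Fin s' → A,
      Matrix.vecMul X'' U = Matrix.vecMul X' F')
    (hadmG : ∀ Y'' : Fin t'' → A, ∃ Y' : Fin t' → A,
      Matrix.vecMul Y'' V = Matrix.vecMul Y' G')
    (hexact : ∀ Y : Fin t' ⊕ Fin t'' → A,
      (∃ X : Fin s' ⊕ Fin s'' → A,
        Matrix.vecMul X (Matrix.fromBlocks F' 0 U F'') = Y) ↔
      Matrix.vecMul Y (Matrix.fromBlocks G' 0 V G'') = 0)
    (Y'' : Fin t'' → A) (hY'' : Matrix.vecMul Y'' G'' = 0) :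
    Matrix.vecMul Y'' V = 0 ∧
      Matrix.vecMul (Sum.elim 0 Y'') (Matrix.fromBlocks G' 0 V G'') = 0 := by
  have hFG : ∀ W, W ᵥ* F' ᵥ* G' = 0 :=
    vecMul_vecMul_eq_zero_of_fromBlocks fun X => (hexact _).mp ⟨X, rfl⟩
  obtain ⟨Y', hY'⟩ := hadmG Y''
  have hker : Sum.elim (-Y') Y'' ᵥ* fromBlocks G' 0 V G'' = 0 := by
    rw [sumElim_vecMul_fromBlocks_zero, hY', hY'', neg_vecMul, neg_add_cancel, Sum.elim_zero_zero]
  obtain ⟨X, hX⟩ := (hexact _).mpr hker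
  obtain ⟨W, hW⟩ := exists_vecMul_fromBlocks_comp_inl F'' hadmF X
  rw [hX, Sum.elim_comp_inl] at hW
  have hV : Y'' ᵥ* V = 0 := by
    rw [hY', ← neg_neg Y', hW, neg_vecMul, hFG, neg_zero]
  refine ⟨hV, ?_⟩
  rw [sumElim_vecMul_fromBlocks_zero, zero_vecMul, zero_add, hV, hY'', Sum.elim_zero_zero]
end

section
/- (Lemma 4.3, first row.) Let F = fromBlocks(F',0,U,F'') ∈ M_{(s'+s'')×(t'+t'')}(A) and G = fromBlocks(G',0,V,G'') ∈ M_{(t'+t'')×(u'+u'')}(A) both be admissible, and suppose the pair of maps (·F : A^{s'+s''} → A^{t'+t''}, ·G : A^{t'+t''} → A^{u'+u''}) is exact. Then the pair of maps (·F' : A^{s'} → A^{t'}, ·G' : A^{t'} → A^{u'}) is exact, i.e. the image of ·F' equals the kernel of ·G'. -/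
/-!
Vectors of the form `(Y', 0)` see only the upper-left blocks, so exactness of `(·F, ·G)` at
`(X'·F', 0)` gives `X'·F'·G' = 0`. Conversely, if `Y'·G' = 0` then `(Y', 0) = X·F`, whose first
block `X₁·F' + X₂·U` lies in the image of `·F'` because `F` is admissible.
-/

namespace Matrix

variable {R : Type*} {l m n o : Type*}

/-- The lower block triangular matrix `fromBlocks F' 0 U F''` is admissible when every row
combination of `U` is one of `F'`. -/
def IsAdmissible [Semiring R] [Fintype m] [Fintype n] (F' : Matrix m l R) (U : Matrix n l R) :
    Prop :=
  ∀ x : n → R, ∃ x' : m → R, x ᵥ* U = x' ᵥ* F'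

theorem sumElim_zero_vecMul_fromBlocks_zero [NonUnitalNonAssocSemiring R] [Fintype m]
    [Fintype n] (x : m → R) (F' : Matrix m l R) (U : Matrix n l R) (F'' : Matrix n o R) :
    Sum.elim x 0 ᵥ* fromBlocks F' 0 U F'' = Sum.elim (x ᵥ* F') 0 := by
  rw [vecMul_fromBlocks, Sum.elim_comp_inl, Sum.elim_comp_inr, zero_vecMul, zero_vecMul,
    vecMul_zero, add_zero, add_zero]

theorem IsAdmissible.exists_vecMul_eq_comp_inl [Semiring R] [Fintype m] [Fintype n]
    {F' : Matrix m l R} {U : Matrix n l R} (hadm : IsAdmissible F' U) (F'' : Matrix n o R)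
    (x : m ⊕ n → R) : ∃ x' : m → R, x' ᵥ* F' = (x ᵥ* fromBlocks F' 0 U F'') ∘ Sum.inl := by
  obtain ⟨z, hz⟩ := hadm (x ∘ Sum.inr)
  exact ⟨x ∘ Sum.inl + z, by rw [vecMul_fromBlocks, Sum.elim_comp_inl, add_vecMul, hz]⟩

end Matrix

open Matrix in
theorem exact_block_left_general {A : Type*} [Ring A] {s' s'' t' t'' u' u'' : ℕ}
    (F' : Matrix (Fin s') (Fin t') A) (U : Matrix (Fin s'') (Fin t') A)
    (F'' : Matrix (Fin s'') (Fin t'') A)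
    (G' : Matrix (Fin t') (Fin u') A) (V : Matrix (Fin t'') (Fin u') A)
    (G'' : Matrix (Fin t'') (Fin u'') A)
    (hadmF : ∀ X'' : Fin s'' → A, ∃ X' : Fin s' → A,
      Matrix.vecMul X'' U = Matrix.vecMul X' F')
    (hexact : ∀ Y : Fin t' ⊕ Fin t'' → A,
      (∃ X : Fin s' ⊕ Fin s'' → A,
        Matrix.vecMul X (Matrix.fromBlocks F' 0 U F'') = Y) ↔
      Matrix.vecMul Y (Matrix.fromBlocks G' 0 V G'') = 0) :
    ∀ Y' : Fin t' → A,
      (∃ X' : Fin s' → A, Matrix.vecMul X' F' = Y') ↔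
        Matrix.vecMul Y' G' = 0 := by
  intro Y'
  constructor
  · rintro ⟨X', rfl⟩
    have hY := (hexact _).mp ⟨Sum.elim X' 0, sumElim_zero_vecMul_fromBlocks_zero X' F' U F''⟩
    rw [sumElim_zero_vecMul_fromBlocks_zero] at hY
    exact congrArg (· ∘ Sum.inl) hY
  · intro hY'
    obtain ⟨X, hX⟩ := (hexact (Sum.elim Y' 0)).mpr <| by
      rw [sumElim_zero_vecMul_fromBlocks_zero, hY', Sum.elim_zero_zero]
    obtain ⟨X', hX'⟩ := IsAdmissible.exists_vecMul_eq_comp_inl hadmF F'' X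
    exact ⟨X', by rw [hX', hX, Sum.elim_comp_inl]⟩

/-- Lemma 4.3, first row: if `F = fromBlocks F' 0 U F''` and
`G = fromBlocks G' 0 V G''` are admissible and the pair `(·F, ·G)` is exact,
then the pair `(·F', ·G')` is exact. -/
theorem exact_block_left {A : Type*} [Ring A] {s' s'' t' t'' u' u'' : ℕ}
    (F' : Matrix (Fin s') (Fin t') A) (U : Matrix (Fin s'') (Fin t') A)
    (F'' : Matrix (Fin s'') (Fin t'') A)
    (G' : Matrix (Fin t') (Fin u') A) (V : Matrix (Fin t'') (Fin u') A)
    (G'' : Matrix (Fin t'') (Fin u'') A)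
    (hadmF : ∀ X'' : Fin s'' → A, ∃ X' : Fin s' → A,
      Matrix.vecMul X'' U = Matrix.vecMul X' F')
    (hadmG : ∀ Y'' : Fin t'' → A, ∃ Y' : Fin t' → A,
      Matrix.vecMul Y'' V = Matrix.vecMul Y' G')
    (hexact : ∀ Y : Fin t' ⊕ Fin t'' → A,
      (∃ X : Fin s' ⊕ Fin s'' → A,
        Matrix.vecMul X (Matrix.fromBlocks F' 0 U F'') = Y) ↔
      Matrix.vecMul Y (Matrix.fromBlocks G' 0 V G'') = 0) :
    ∀ Y' : Fin t' → A,
      (∃ X' : Fin s' → A, Matrix.vecMul X' F' = Y') ↔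
        Matrix.vecMul Y' G' = 0 :=
  exact_block_left_general F' U F'' G' V G'' hadmF hexact
end

section
/- (Lemma 4.3, third row.) Let F = fromBlocks(F',0,U,F'') ∈ M_{(s'+s'')×(t'+t'')}(A) and G = fromBlocks(G',0,V,G'') ∈ M_{(t'+t'')×(u'+u'')}(A) both be admissible, and suppose the pair of maps (·F : A^{s'+s''} → A^{t'+t''}, ·G : A^{t'+t''} → A^{u'+u''}) is exact. Then the pair of maps (·F'' : A^{s''} → A^{t''}, ·G'' : A^{t''} → A^{u''}) is exact, i.e. the image of ·F'' equals the kernel of ·G''. -/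
/-!
Both implications reduce to the big exact pair through the lower-right corner. Admissibility
of `F` lifts `X''` to `(-X', X'')`, whose image under `·F` is `(0, X''·F'')`; admissibility of
`G` lifts a kernel vector `Y''` of `·G''` to the kernel vector `(-Y', Y'')` of `·G`.
In both directions the `''`-component is then read off, since the upper-right blocks vanish.
-/

namespace Matrix

variable {α l m n o : Type*} [Fintype l] [Fintype m]

theorem vecMul_fromBlocks_zero_comp_inr [NonUnitalNonAssocSemiring α]
    (A : Matrix l n α) (C : Matrix m n α) (D : Matrix m o α) (x : l ⊕ m → α) :
    (x ᵥ* fromBlocks A 0 C D) ∘ Sum.inr = x ∘ Sum.inr ᵥ* D := by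
  rw [vecMul_fromBlocks]
  simp

theorem sumElim_neg_vecMul_fromBlocks_zero [Ring α]
    {A : Matrix l n α} {C : Matrix m n α} (D : Matrix m o α) {x' : l → α} {x'' : m → α}
    (h : x'' ᵥ* C = x' ᵥ* A) :
    Sum.elim (-x') x'' ᵥ* fromBlocks A 0 C D = Sum.elim (0 : n → α) (x'' ᵥ* D) := by
  rw [vecMul_fromBlocks]
  simp [h, neg_vecMul]

end Matrix

open Matrix

/-- Lemma 4.3, third row: if `F = fromBlocks F' 0 U F''` and
`G = fromBlocks G' 0 V G''` are admissible and the pair `(·F, ·G)` is exact,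
then the pair `(·F'', ·G'')` is exact. -/
theorem exact_block_right {A : Type*} [Ring A] {s' s'' t' t'' u' u'' : ℕ}
    (F' : Matrix (Fin s') (Fin t') A) (U : Matrix (Fin s'') (Fin t') A)
    (F'' : Matrix (Fin s'') (Fin t'') A)
    (G' : Matrix (Fin t') (Fin u') A) (V : Matrix (Fin t'') (Fin u') A)
    (G'' : Matrix (Fin t'') (Fin u'') A)
    (hadmF : ∀ X'' : Fin s'' → A, ∃ X' : Fin s' → A,
      Matrix.vecMul X'' U = Matrix.vecMul X' F')
    (hadmG : ∀ Y'' : Fin t'' → A, ∃ Y' : Fin t' → A,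
      Matrix.vecMul Y'' V = Matrix.vecMul Y' G')
    (hexact : ∀ Y : Fin t' ⊕ Fin t'' → A,
      (∃ X : Fin s' ⊕ Fin s'' → A,
        Matrix.vecMul X (Matrix.fromBlocks F' 0 U F'') = Y) ↔
      Matrix.vecMul Y (Matrix.fromBlocks G' 0 V G'') = 0) :
    ∀ Y'' : Fin t'' → A,
      (∃ X'' : Fin s'' → A, Matrix.vecMul X'' F'' = Y'') ↔
        Matrix.vecMul Y'' G'' = 0 := by
  intro Y''
  constructor
  · rintro ⟨X'', rfl⟩
    obtain ⟨X', hX'⟩ := hadmF X''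
    have hker := (hexact _).mp ⟨_, sumElim_neg_vecMul_fromBlocks_zero F'' hX'⟩
    calc X'' ᵥ* F'' ᵥ* G''
        = (Sum.elim 0 (X'' ᵥ* F'') ᵥ* fromBlocks G' 0 V G'') ∘ Sum.inr :=
          (vecMul_fromBlocks_zero_comp_inr G' V G'' (Sum.elim 0 (X'' ᵥ* F''))).symm
      _ = 0 := by rw [hker]; rfl
  · intro hY
    obtain ⟨Y', hY'⟩ := hadmG Y''
    obtain ⟨X, hX⟩ := (hexact _).mpr <| by
      rw [sumElim_neg_vecMul_fromBlocks_zero G'' hY', hY, Sum.elim_zero_zero]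
    exact ⟨X ∘ Sum.inr, by rw [← vecMul_fromBlocks_zero_comp_inr F' U, hX]; rfl⟩
end

section
/- (Theorem 4.5, decomposition of the resolution, matrix form.) Let (n_m)_{m≥0} be natural numbers with splittings n_m = n'_m + n''_m, and for each m ≥ 1 let F_m = fromBlocks(F'_m, 0, U_m, F''_m) ∈ M_{n_m × n_{m-1}}(A) be an admissible block lower-triangular matrix (F'_m of size n'_m × n'_{m-1}, U_m of size n''_m × n'_{m-1}, F''_m of size n''_m × n''_{m-1}). Suppose that for every m ≥ 1 the pair of maps (·F_{m+1} : A^{n_{m+1}} → A^{n_m}, ·F_m : A^{n_m} → A^{n_{m-1}}) is exact. Then for every m ≥ 1 both pairs (·F'_{m+1} : A^{n'_{m+1}} → A^{n'_m}, ·F'_m : A^{n'_m} → A^{n'_{m-1}}) and (·F''_{m+1} : A^{n''_{m+1}} → A^{n''_m}, ·F''_m : A^{n''_m} → A^{n''_{m-1}}) are exact; that is, the exact sequence of free modules decomposes as the direct sum of the primed and the double-primed exact sequences. -/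
open Matrix

/-!
Since `(X', X'')·F_m = (X'·F'_m + X''·U_m, X''·F''_m)`, both block sequences are complexes.
If `Y'·F'_m = 0`, then `(Y', 0)` is a cycle, hence `(Y', 0) = (X'·F' + X''·U, X''·F'')`, and
admissibility turns `X''·U` into `Z'·F'`, so `Y' = (X' + Z')·F'`.
If `Y''·F''_m = 0`, admissibility gives `Y''·U_m = W'·F'_m`, so `(-W', Y'')` is a cycle and
`Y''` is the second component of a boundary.
-/

section

variable {A : Type*}

/-- `fromBlocks F' 0 U F''` is admissible when every row combination of `U` is one of `F'`. -/
def Matrix.AdmissibleBlocks [Semiring A] {ι' ι'' κ : Type*} [Fintype ι'] [Fintype ι'']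
    (F' : Matrix ι' κ A) (U : Matrix ι'' κ A) : Prop :=
  ∀ X'' : ι'' → A, ∃ X' : ι' → A, X'' ᵥ* U = X' ᵥ* F'

variable {ι' ι'' κ' κ'' : Type*} [Fintype ι'] [Fintype ι'']

theorem Matrix.sumElim_vecMul_fromBlocks_zero_s5 [NonUnitalNonAssocSemiring A]
    (F' : Matrix ι' κ' A) (U : Matrix ι'' κ' A) (F'' : Matrix ι'' κ'' A)
    (X' : ι' → A) (X'' : ι'' → A) :
    Sum.elim X' X'' ᵥ* fromBlocks F' 0 U F'' = Sum.elim (X' ᵥ* F' + X'' ᵥ* U) (X'' ᵥ* F'') := by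
  simp [vecMul_fromBlocks]

variable {ι₂' ι₂'' ι₁' ι₁'' ι₀' ι₀'' : Type*}
  [Fintype ι₂'] [Fintype ι₂''] [Fintype ι₁'] [Fintype ι₁'']
  {F'₁ : Matrix ι₂' ι₁' A} {U₁ : Matrix ι₂'' ι₁' A} {F''₁ : Matrix ι₂'' ι₁'' A}
  {F'₀ : Matrix ι₁' ι₀' A} {U₀ : Matrix ι₁'' ι₀' A} {F''₀ : Matrix ι₁'' ι₀'' A}

theorem Function.Exact.vecMul_fromBlocks_left [Semiring A] (hadm : AdmissibleBlocks F'₁ U₁)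
    (h : Function.Exact (· ᵥ* fromBlocks F'₁ 0 U₁ F''₁) (· ᵥ* fromBlocks F'₀ 0 U₀ F''₀)) :
    Function.Exact (· ᵥ* F'₁) (· ᵥ* F'₀) := by
  intro Y'
  constructor
  · intro hY'
    have hcycle : Sum.elim Y' 0 ᵥ* fromBlocks F'₀ 0 U₀ F''₀ = 0 := by
      simp [sumElim_vecMul_fromBlocks_zero_s5, hY']
    obtain ⟨X, hX : X ᵥ* _ = _⟩ := (h _).1 hcycle
    rw [← Sum.elim_comp_inl_inr X, sumElim_vecMul_fromBlocks_zero_s5, Sum.elim_eq_iff] at hX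
    obtain ⟨Z', hZ'⟩ := hadm (X ∘ Sum.inr)
    exact ⟨X ∘ Sum.inl + Z', show _ ᵥ* _ = _ by rw [add_vecMul, ← hZ', hX.1]⟩
  · rintro ⟨X', rfl⟩
    have h0 := h.apply_apply_eq_zero (Sum.elim X' 0)
    simp only [sumElim_vecMul_fromBlocks_zero_s5, zero_vecMul, add_zero] at h0
    rw [← Sum.elim_zero_zero, Sum.elim_eq_iff] at h0
    exact h0.1

theorem Function.Exact.vecMul_fromBlocks_right [Ring A] (hadm : AdmissibleBlocks F'₀ U₀)
    (h : Function.Exact (· ᵥ* fromBlocks F'₁ 0 U₁ F''₁) (· ᵥ* fromBlocks F'₀ 0 U₀ F''₀)) :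
    Function.Exact (· ᵥ* F''₁) (· ᵥ* F''₀) := by
  intro Y''
  constructor
  · intro hY''
    obtain ⟨W', hW'⟩ := hadm Y''
    have hcycle : Sum.elim (-W') Y'' ᵥ* fromBlocks F'₀ 0 U₀ F''₀ = 0 := by
      simp [sumElim_vecMul_fromBlocks_zero_s5, hY'', hW', neg_vecMul]
    obtain ⟨X, hX : X ᵥ* _ = _⟩ := (h _).1 hcycle
    rw [← Sum.elim_comp_inl_inr X, sumElim_vecMul_fromBlocks_zero_s5, Sum.elim_eq_iff] at hX
    exact ⟨X ∘ Sum.inr, hX.2⟩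
  · rintro ⟨X'', rfl⟩
    have h0 := h.apply_apply_eq_zero (Sum.elim 0 X'')
    rw [sumElim_vecMul_fromBlocks_zero_s5, sumElim_vecMul_fromBlocks_zero_s5, ← Sum.elim_zero_zero,
      Sum.elim_eq_iff] at h0
    exact h0.2

end

/-- Theorem 4.5, matrix form: a long exact sequence of free
modules given by admissible block lower-triangular matrices decomposes into
the direct sum of the primed and double-primed exact sequences.
Here `F' m`, `U m`, `F'' m` are the blocks of the matrix `F_{m+1}` of the
paper, inducing the map `A^{n_{m+1}} → A^{n_m}`. -/
theorem exact_decomposition {A : Type*} [Ring A] (s' s'' : ℕ → ℕ)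
    (F' : ∀ m : ℕ, Matrix (Fin (s' (m + 1))) (Fin (s' m)) A)
    (U : ∀ m : ℕ, Matrix (Fin (s'' (m + 1))) (Fin (s' m)) A)
    (F'' : ∀ m : ℕ, Matrix (Fin (s'' (m + 1))) (Fin (s'' m)) A)
    (hadm : ∀ m : ℕ, ∀ X'' : Fin (s'' (m + 1)) → A, ∃ X' : Fin (s' (m + 1)) → A,
      Matrix.vecMul X'' (U m) = Matrix.vecMul X' (F' m))
    (hexact : ∀ m : ℕ, ∀ Y : Fin (s' (m + 1)) ⊕ Fin (s'' (m + 1)) → A,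
      (∃ X : Fin (s' (m + 2)) ⊕ Fin (s'' (m + 2)) → A,
        Matrix.vecMul X
          (Matrix.fromBlocks (F' (m + 1)) 0 (U (m + 1)) (F'' (m + 1))) = Y) ↔
      Matrix.vecMul Y (Matrix.fromBlocks (F' m) 0 (U m) (F'' m)) = 0) :
    ∀ m : ℕ,
      (∀ Y' : Fin (s' (m + 1)) → A,
        (∃ X' : Fin (s' (m + 2)) → A, Matrix.vecMul X' (F' (m + 1)) = Y') ↔
          Matrix.vecMul Y' (F' m) = 0) ∧
      (∀ Y'' : Fin (s'' (m + 1)) → A,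
        (∃ X'' : Fin (s'' (m + 2)) → A, Matrix.vecMul X'' (F'' (m + 1)) = Y'') ↔
          Matrix.vecMul Y'' (F'' m) = 0) := by
  intro m
  have hF : Function.Exact (· ᵥ* fromBlocks (F' (m + 1)) 0 (U (m + 1)) (F'' (m + 1)))
      (· ᵥ* fromBlocks (F' m) 0 (U m) (F'' m)) := fun Y => (hexact m Y).symm
  exact ⟨fun Y' => ((hF.vecMul_fromBlocks_left (hadm (m + 1))) Y').symm,
    fun Y'' => ((hF.vecMul_fromBlocks_right (hadm m)) Y'').symm⟩
end

section
/- (Lemma 3.4.) Let A be a ring, J a left ideal of A, M a left A-module, K ≤ M a submodule, N := M/K with quotient map p : M → N, and assume J·K = K ∩ (J·M) (equality of submodules of M). Let Q and L be projective left A-modules together with surjective A-linear maps q : Q → K and l : L → N satisfying ker q ⊆ J·Q and ker l ⊆ J·L. Then there exists a surjective A-linear map r : Q × L → M such that r(x,0) = q(x) in M (i.e. r ∘ inl equals the inclusion K → M composed with q), p(r(x,y)) = l(y) for all (x,y), and ker r ⊆ J·(Q × L); moreover the maps x ↦ (x,0) and (x,y) ↦ y restrict to a short exact sequence 0 → ker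 q → ker r → ker l → 0. -/
/-!
Lift `l` along `M → M/K` to `f : L → M` using projectivity of `L`, and put `r (x, y) = q x + f y`.
If `r (x, y) = 0`, then `l y = 0`, so `y ∈ J·L` and `f y = -q x` lies in `K ∩ J·M = J·K`. Since `q`
is onto `K`, this is `q u` for some `u ∈ J·Q`, so `x + u ∈ ker q ⊆ J·Q` and hence `x ∈ J·Q`.
-/

/-- For a left ideal `J` of `A` and a submodule `K` of a left `A`-module `M`,
`J·K` is the submodule of `M` generated by all products `a • k`, `a ∈ J`,
`k ∈ K`. -/
def idealSmul {A : Type*} [Ring A] {M : Type*} [AddCommGroup M] [Module A M]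
    (J : Ideal A) (K : Submodule A M) : Submodule A M :=
  Submodule.span A {m : M | ∃ a ∈ J, ∃ k ∈ K, m = a • k}

section IdealSmul

variable {A : Type*} [Ring A] (J : Ideal A) {M N : Type*} [AddCommGroup M] [Module A M]
  [AddCommGroup N] [Module A N]

theorem idealSmul_eq_smul (K : Submodule A M) : idealSmul J K = J • K :=
  le_antisymm
    (Submodule.span_le.2 fun _ ⟨_, ha, _, hk, hm⟩ ↦ hm ▸ Submodule.smul_mem_smul ha hk)
    (Submodule.smul_le.2 fun a ha k hk ↦ Submodule.subset_span ⟨a, ha, k, hk, rfl⟩)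

theorem map_idealSmul (g : M →ₗ[A] N) (K : Submodule A M) :
    (idealSmul J K).map g = idealSmul J (K.map g) := by
  simp only [idealSmul_eq_smul, Submodule.map_smul'']

theorem map_mem_idealSmul_top (g : M →ₗ[A] N) {x : M} (hx : x ∈ idealSmul J ⊤) :
    g x ∈ idealSmul J (⊤ : Submodule A N) := by
  have hmap : (idealSmul J ⊤).map g ≤ idealSmul J ⊤ := by
    rw [map_idealSmul, idealSmul_eq_smul, idealSmul_eq_smul]
    exact Submodule.smul_mono le_rfl le_top
  exact hmap (Submodule.mem_map_of_mem hx)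

theorem prodMk_mem_idealSmul_top {x : M} {y : N} (hx : x ∈ idealSmul J ⊤)
    (hy : y ∈ idealSmul J ⊤) : (x, y) ∈ idealSmul J (⊤ : Submodule A (M × N)) := by
  rw [← add_zero x, ← zero_add y, ← Prod.mk_add_mk]
  exact add_mem (map_mem_idealSmul_top J (LinearMap.inl A M N) hx)
    (map_mem_idealSmul_top J (LinearMap.inr A M N) hy)

theorem mem_idealSmul_top_of_map_mem {g : M →ₗ[A] N} (hker : LinearMap.ker g ≤ idealSmul J ⊤)
    {x : M} (hx : g x ∈ (idealSmul J ⊤).map g) : x ∈ idealSmul J ⊤ := by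
  rwa [← Submodule.mem_comap, Submodule.comap_map_eq_self hker] at hx

end IdealSmul

section Extension

variable {A : Type*} [Ring A] {M Q L : Type*} [AddCommGroup M] [Module A M]
  [AddCommGroup Q] [Module A Q] [AddCommGroup L] [Module A L]
  {K : Submodule A M} (q : Q →ₗ[A] K) (f : L →ₗ[A] M)

theorem mkQ_coprod_apply (z : Q × L) :
    K.mkQ ((K.subtype ∘ₗ q).coprod f z) = K.mkQ (f z.2) := by
  simp [LinearMap.coprod_apply, (Submodule.Quotient.mk_eq_zero K).2 (q z.1).2]

theorem range_subtype_comp_of_surjective (hq : Function.Surjective q) :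
    LinearMap.range (K.subtype ∘ₗ q) = K := by
  rw [LinearMap.range_comp_of_range_eq_top _ (LinearMap.range_eq_top.2 hq),
    Submodule.range_subtype]

theorem coprod_surjective (hq : Function.Surjective q)
    (hf : Function.Surjective (K.mkQ ∘ₗ f)) :
    Function.Surjective ((K.subtype ∘ₗ q).coprod f) := by
  rw [← LinearMap.range_eq_top, LinearMap.range_coprod, range_subtype_comp_of_surjective q hq,
    ← Submodule.map_mkQ_eq_top, ← LinearMap.range_comp, LinearMap.range_eq_top]
  exact hf

theorem exists_coprod_apply_eq_zero (hq : Function.Surjective q) {y : L}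
    (hy : K.mkQ (f y) = 0) : ∃ x : Q, (K.subtype ∘ₗ q).coprod f (x, y) = 0 := by
  obtain ⟨x, hx⟩ := hq ⟨-f y, K.neg_mem ((Submodule.Quotient.mk_eq_zero K).1 hy)⟩
  exact ⟨x, by simp [hx]⟩

theorem ker_coprod_le_idealSmul (J : Ideal A)
    (hJK : idealSmul J K = K ⊓ idealSmul J (⊤ : Submodule A M)) (hq : Function.Surjective q)
    (hkerq : LinearMap.ker q ≤ idealSmul J ⊤) (hkerf : LinearMap.ker (K.mkQ ∘ₗ f) ≤ idealSmul J ⊤) :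
    LinearMap.ker ((K.subtype ∘ₗ q).coprod f) ≤ idealSmul J ⊤ := by
  rintro ⟨x, y⟩ hz
  have hsum : (q x : M) + f y = 0 := hz
  have hy : y ∈ idealSmul J ⊤ := hkerf <| by
    simpa using (mkQ_coprod_apply q f (x, y)).symm.trans (congrArg K.mkQ hz)
  have hqx : (K.subtype ∘ₗ q) x ∈ (idealSmul J ⊤).map (K.subtype ∘ₗ q) := by
    rw [map_idealSmul, Submodule.map_top, range_subtype_comp_of_surjective q hq, hJK]
    refine ⟨(q x).2, ?_⟩
    rw [LinearMap.comp_apply, Submodule.subtype_apply, eq_neg_of_add_eq_zero_left hsum]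
    exact neg_mem (map_mem_idealSmul_top J f hy)
  have hx : x ∈ idealSmul J ⊤ := by
    refine mem_idealSmul_top_of_map_mem J ?_ hqx
    rwa [LinearMap.ker_comp_of_ker_eq_bot _ K.ker_subtype]
  exact prodMk_mem_idealSmul_top J hx hy

end Extension

theorem projective_cover_extension_general {A : Type*} [Ring A] (J : Ideal A)
    {M : Type*} [AddCommGroup M] [Module A M] (K : Submodule A M)
    (hJK : idealSmul J K = K ⊓ idealSmul J (⊤ : Submodule A M))
    {Q L : Type*} [AddCommGroup Q] [Module A Q] [AddCommGroup L] [Module A L]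
    [Module.Projective A L]
    (q : Q →ₗ[A] K) (hq : Function.Surjective q)
    (hkerq : ∀ x : Q, q x = 0 → x ∈ idealSmul J (⊤ : Submodule A Q))
    (l : L →ₗ[A] (M ⧸ K)) (hl : Function.Surjective l)
    (hkerl : ∀ y : L, l y = 0 → y ∈ idealSmul J (⊤ : Submodule A L)) :
    ∃ r : (Q × L) →ₗ[A] M, Function.Surjective r ∧
      (∀ x : Q, r (x, 0) = (q x : M)) ∧
      (∀ z : Q × L, K.mkQ (r z) = l z.2) ∧
      (∀ z : Q × L, r z = 0 → z ∈ idealSmul J (⊤ : Submodule A (Q × L))) ∧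
      -- the short exact sequence `0 → ker q → ker r → ker l → 0`
      (∀ x : Q, q x = 0 → r (x, 0) = 0) ∧
      (∀ z : Q × L, r z = 0 → z.2 = 0 → q z.1 = 0) ∧
      (∀ z : Q × L, r z = 0 → l z.2 = 0) ∧
      (∀ y : L, l y = 0 → ∃ x : Q, r (x, y) = 0) := by
  obtain ⟨f, rfl⟩ := Module.projective_lifting_property K.mkQ l K.mkQ_surjective
  have hmk := mkQ_coprod_apply q f
  refine ⟨(K.subtype ∘ₗ q).coprod f, coprod_surjective q f hq hl, fun x ↦ by simp, hmk,
    ker_coprod_le_idealSmul q f J hJK hq (fun x ↦ hkerq x) (fun y ↦ hkerl y),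
    fun x hx ↦ by simp [hx], ?_, fun z hz ↦ by simpa [hz] using (hmk z).symm,
    fun y hy ↦ exists_coprod_apply_eq_zero q f hq hy⟩
  rintro ⟨x, y⟩ hz rfl
  simpa using hz

/-- Lemma 3.4: given `J·K = K ∩ J·M` and projective covers
`q : Q → K`, `l : L → M/K` (i.e. surjections with kernels contained in `J·Q`,
`J·L`), there is a surjection `r : Q × L → M` compatible with `q` and `l`,
with `ker r ⊆ J·(Q × L)`, and the kernels form a short exact sequence
`0 → ker q → ker r → ker l → 0`. -/
theorem projective_cover_extension {A : Type*} [Ring A] (J : Ideal A)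
    {M : Type*} [AddCommGroup M] [Module A M] (K : Submodule A M)
    (hJK : idealSmul J K = K ⊓ idealSmul J (⊤ : Submodule A M))
    {Q L : Type*} [AddCommGroup Q] [Module A Q] [AddCommGroup L] [Module A L]
    [Module.Projective A Q] [Module.Projective A L]
    (q : Q →ₗ[A] K) (hq : Function.Surjective q)
    (hkerq : ∀ x : Q, q x = 0 → x ∈ idealSmul J (⊤ : Submodule A Q))
    (l : L →ₗ[A] (M ⧸ K)) (hl : Function.Surjective l)
    (hkerl : ∀ y : L, l y = 0 → y ∈ idealSmul J (⊤ : Submodule A L)) :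
    ∃ r : (Q × L) →ₗ[A] M, Function.Surjective r ∧
      (∀ x : Q, r (x, 0) = (q x : M)) ∧
      (∀ z : Q × L, K.mkQ (r z) = l z.2) ∧
      (∀ z : Q × L, r z = 0 → z ∈ idealSmul J (⊤ : Submodule A (Q × L))) ∧
      -- the short exact sequence `0 → ker q → ker r → ker l → 0`
      (∀ x : Q, q x = 0 → r (x, 0) = 0) ∧
      (∀ z : Q × L, r z = 0 → z.2 = 0 → q z.1 = 0) ∧
      (∀ z : Q × L, r z = 0 → l z.2 = 0) ∧
      (∀ y : L, l y = 0 → ∃ x : Q, r (x, y) = 0) :=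
  projective_cover_extension_general J K hJK q hq hkerq l hl hkerl
end

section
/- (Lemma 3.5, graded form.) Let A be an ℕ-graded ring with grading A = ⊕_{i≥0} A_i, and let J := ⊕_{i≥1} A_i be the irrelevant (graded radical) ideal. Let M be an ℕ-graded left A-module with grading M = ⊕_{j≥0} M_j compatible with that of A (A_i·M_j ⊆ M_{i+j}). Fix d ∈ ℕ and suppose M is generated in degree d, i.e. M equals the A-submodule generated by M_d, and let K ≤ M be a homogeneous (graded) submodule of M that is generated in degree d, i.e. K equals the A-submodule generated by K ∩ M_d. Then J·K = K ∩ (J·M) as submodules of M. -/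
set_option linter.unusedSectionVars false
set_option synthInstance.maxHeartbeats 1000000
set_option maxHeartbeats 1000000

open DirectSum

section Helpers

variable {A : Type*} [Ring A] (𝒜 : ℕ → AddSubgroup A) [GradedRing 𝒜]
    {M : Type*} [AddCommGroup M] [Module A M]
    (ℳ : ℕ → AddSubgroup M) [DirectSum.Decomposition ℳ]
    [SetLike.GradedSMul 𝒜 ℳ]

/-- decompose commutes with finite sums (coerced). -/
lemma decompose_coe_sum {ι : Type*} (s : Finset ι) (f : ι → M) (j : ℕ) :
    ((DirectSum.decompose ℳ (∑ t ∈ s, f t) j : ℳ j) : M)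
      = ∑ t ∈ s, ((DirectSum.decompose ℳ (f t) j : ℳ j) : M) := by
  classical
  induction s using Finset.cons_induction with
  | empty => simp
  | cons a s ha ih =>
      rw [Finset.sum_cons, Finset.sum_cons, ← ih, DirectSum.decompose_add]
      simp

/-- If `a` is homogeneous of degree `i` and `m` homogeneous of degree `j'`,
the degree-`j` component of `a • m` vanishes for `j ≠ i + j'`. -/
lemma decompose_homog_smul_homog_ne {a : A} {i j' j : ℕ} (ha : a ∈ 𝒜 i) {m : M}
    (hm : m ∈ ℳ j') (h : i + j' ≠ j) :
    ((DirectSum.decompose ℳ (a • m) j : ℳ j) : M) = 0 :=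
  DirectSum.decompose_of_mem_ne ℳ (SetLike.GradedSMul.smul_mem ha hm) h

include 𝒜

/-- For arbitrary `a` and `m` homogeneous of degree `j' > j`, the degree-`j`
component of `a • m` vanishes. -/
lemma decompose_smul_homog_lt (a : A) {j' j : ℕ} {m : M} (hm : m ∈ ℳ j')
    (h : j < j') : ((DirectSum.decompose ℳ (a • m) j : ℳ j) : M) = 0 := by
  classical
  have ha : a = ∑ i ∈ (DirectSum.decompose 𝒜 a).support,
      ((DirectSum.decompose 𝒜 a i : 𝒜 i) : A) :=
    (DirectSum.sum_support_decompose 𝒜 a).symm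
  calc ((DirectSum.decompose ℳ (a • m) j : ℳ j) : M)
      = ((DirectSum.decompose ℳ ((∑ i ∈ (DirectSum.decompose 𝒜 a).support,
          ((DirectSum.decompose 𝒜 a i : 𝒜 i) : A)) • m) j : ℳ j) : M) := by rw [← ha]
    _ = ((DirectSum.decompose ℳ (∑ i ∈ (DirectSum.decompose 𝒜 a).support,
          (((DirectSum.decompose 𝒜 a i : 𝒜 i) : A) • m)) j : ℳ j) : M) := by
          rw [Finset.sum_smul]
    _ = ∑ i ∈ (DirectSum.decompose 𝒜 a).support,
          ((DirectSum.decompose ℳ ((((DirectSum.decompose 𝒜 a i : 𝒜 i) : A) • m)) j : ℳ j) : M) :=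
          decompose_coe_sum ℳ _ _ _
    _ = 0 := by
          refine Finset.sum_eq_zero fun i _ => ?_
          exact decompose_homog_smul_homog_ne 𝒜 ℳ (SetLike.coe_mem _) hm (by omega)

/-- The set of elements of `M` all of whose components of degree `< c` vanish,
as a submodule. -/
def degGE (c : ℕ) : Submodule A M where
  carrier := {m : M | ∀ j < c, ((DirectSum.decompose ℳ m j : ℳ j) : M) = 0}
  add_mem' := by
    intro x y hx hy j hj
    rw [DirectSum.decompose_add]
    simp only [DirectSum.add_apply, AddSubgroup.coe_add]
    rw [hx j hj, hy j hj, add_zero]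
  zero_mem' := by intro j hj; simp
  smul_mem' := by
    classical
    intro a m hm j hj
    have hmsum : m = ∑ j' ∈ (DirectSum.decompose ℳ m).support,
        ((DirectSum.decompose ℳ m j' : ℳ j') : M) :=
      (DirectSum.sum_support_decompose ℳ m).symm
    calc ((DirectSum.decompose ℳ (a • m) j : ℳ j) : M)
        = ((DirectSum.decompose ℳ (∑ j' ∈ (DirectSum.decompose ℳ m).support,
            (a • ((DirectSum.decompose ℳ m j' : ℳ j') : M))) j : ℳ j) : M) := by
            rw [← Finset.smul_sum, ← hmsum]
      _ = ∑ j' ∈ (DirectSum.decompose ℳ m).support,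
            ((DirectSum.decompose ℳ (a • ((DirectSum.decompose ℳ m j' : ℳ j') : M)) j : ℳ j) : M) :=
            decompose_coe_sum ℳ _ _ _
      _ = 0 := by
            refine Finset.sum_eq_zero fun j' _ => ?_
            by_cases h : j' < c
            · rw [hm j' h]; simp
            · exact decompose_smul_homog_lt 𝒜 ℳ a (SetLike.coe_mem _) (by omega)

lemma mem_degGE {c : ℕ} {m : M} (hm : m ∈ ℳ c) : m ∈ degGE 𝒜 ℳ c :=
  fun j hj => DirectSum.decompose_of_mem_ne ℳ hm (by omega)

end Helpers

/-- Lemma 3.5, graded form: let `A` be an ℕ-graded ring with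
irrelevant ideal `J = ⊕_{i ≥ 1} A_i`, and `M` an ℕ-graded left `A`-module
generated in degree `d`. If `K ≤ M` is a homogeneous submodule generated in
degree `d`, then `J·K = K ∩ J·M`. -/
theorem graded_radical_intersection {A : Type*} [Ring A]
    (𝒜 : ℕ → AddSubgroup A) [GradedRing 𝒜]
    {M : Type*} [AddCommGroup M] [Module A M]
    (ℳ : ℕ → AddSubgroup M) [DirectSum.Decomposition ℳ]
    [SetLike.GradedSMul 𝒜 ℳ]
    (J : Ideal A) (hJ : J = Ideal.span {a : A | ∃ i ≥ 1, a ∈ 𝒜 i})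
    (d : ℕ)
    (hM : (⊤ : Submodule A M) = Submodule.span A (ℳ d : Set M))
    (K : Submodule A M)
    (hKhom : ∀ m ∈ K, ∀ j : ℕ, (DirectSum.decompose ℳ m j : M) ∈ K)
    (hKgen : K = Submodule.span A ((K : Set M) ∩ (ℳ d : Set M))) :
    idealSmul J K = K ⊓ idealSmul J (⊤ : Submodule A M) := by
  classical
  -- every element of M has components only in degrees ≥ d
  have hMge : ∀ m : M, m ∈ degGE 𝒜 ℳ d := by
    intro m
    have : (⊤ : Submodule A M) ≤ degGE 𝒜 ℳ d := by
      rw [hM, Submodule.span_le]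
      exact fun x hx => mem_degGE 𝒜 ℳ hx
    exact this trivial
  -- elements of J·⊤ have components only in degrees ≥ d+1
  have hJM : idealSmul J (⊤ : Submodule A M) ≤ degGE 𝒜 ℳ (d + 1) := by
    rw [idealSmul, Submodule.span_le]
    rintro _ ⟨a, haJ, k, -, rfl⟩
    -- show a • k ∈ degGE (d+1) using span induction on a ∈ J
    rw [hJ] at haJ
    induction haJ using Submodule.span_induction with
    | mem x hx =>
        obtain ⟨i, hi, hxi⟩ := hx
        intro j hj
        have hk : k = ∑ j' ∈ (DirectSum.decompose ℳ k).support,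
            ((DirectSum.decompose ℳ k j' : ℳ j') : M) :=
          (DirectSum.sum_support_decompose ℳ k).symm
        calc ((DirectSum.decompose ℳ (x • k) j : ℳ j) : M)
            = ((DirectSum.decompose ℳ (∑ j' ∈ (DirectSum.decompose ℳ k).support,
                (x • ((DirectSum.decompose ℳ k j' : ℳ j') : M))) j : ℳ j) : M) := by
                rw [← Finset.smul_sum, ← hk]
          _ = ∑ j' ∈ (DirectSum.decompose ℳ k).support,
                ((DirectSum.decompose ℳ (x • ((DirectSum.decompose ℳ k j' : ℳ j') : M)) j : ℳ j) : M) :=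
                decompose_coe_sum ℳ _ _ _
          _ = 0 := by
                refine Finset.sum_eq_zero fun j' _ => ?_
                by_cases h : j' < d
                · rw [hMge k j' h]; simp
                · exact decompose_homog_smul_homog_ne 𝒜 ℳ hxi (SetLike.coe_mem _) (by omega)
    | zero => simp
    | add x y hx hy ihx ihy =>
        have := (degGE 𝒜 ℳ (d + 1)).add_mem ihx ihy
        simpa [add_smul] using this
    | smul b x hx ihx =>
        have := (degGE 𝒜 ℳ (d + 1)).smul_mem b ihx
        simpa [mul_smul] using this
  -- key: homogeneous elements of K of degree > d lie in J·K
  have hkey : ∀ j > d, ∀ m ∈ K, m ∈ ℳ j → m ∈ idealSmul J K := by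
    intro j hj m hmK hmj
    have hmspan : m ∈ Submodule.span A ((K : Set M) ∩ (ℳ d : Set M)) := by
      rw [← hKgen]; exact hmK
    rw [Submodule.mem_span_set] at hmspan
    obtain ⟨c, hcsupp, hcsum⟩ := hmspan
    have hm : m = ((DirectSum.decompose ℳ m j : ℳ j) : M) :=
      (DirectSum.decompose_of_mem_same ℳ hmj).symm
    rw [hm, ← hcsum, Finsupp.sum, decompose_coe_sum ℳ _ _ j]
    refine Submodule.sum_mem _ fun k hk => ?_
    obtain ⟨hkK, hkd⟩ := hcsupp hk
    -- decompose the coefficient c k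
    have hck : (c k) = ∑ i ∈ (DirectSum.decompose 𝒜 (c k)).support,
        ((DirectSum.decompose 𝒜 (c k) i : 𝒜 i) : A) :=
      (DirectSum.sum_support_decompose 𝒜 (c k)).symm
    have heq : ((DirectSum.decompose ℳ (c k • k) j : ℳ j) : M)
        = ∑ i ∈ (DirectSum.decompose 𝒜 (c k)).support,
            ((DirectSum.decompose ℳ ((((DirectSum.decompose 𝒜 (c k) i : 𝒜 i) : A)) • k) j : ℳ j) : M) := by
      calc ((DirectSum.decompose ℳ (c k • k) j : ℳ j) : M)
          = ((DirectSum.decompose ℳ (∑ i ∈ (DirectSum.decompose 𝒜 (c k)).support,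
              (((DirectSum.decompose 𝒜 (c k) i : 𝒜 i) : A) • k)) j : ℳ j) : M) := by
              rw [← Finset.sum_smul, ← hck]
        _ = ∑ i ∈ (DirectSum.decompose 𝒜 (c k)).support,
              ((DirectSum.decompose ℳ ((((DirectSum.decompose 𝒜 (c k) i : 𝒜 i) : A)) • k) j : ℳ j) : M) :=
              decompose_coe_sum ℳ _ _ _
    rw [heq]
    refine Submodule.sum_mem _ fun i _ => ?_
    by_cases h : i + d = j
    · have hmem : (((DirectSum.decompose 𝒜 (c k) i : 𝒜 i) : A) • k) ∈ ℳ j := by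
        have := SetLike.GradedSMul.smul_mem
          (SetLike.coe_mem (DirectSum.decompose 𝒜 (c k) i)) hkd
        simpa [← h] using this
      rw [DirectSum.decompose_of_mem_same ℳ hmem]
      have hi1 : 1 ≤ i := by omega
      have haJ : ((DirectSum.decompose 𝒜 (c k) i : 𝒜 i) : A) ∈ J := by
        rw [hJ]
        exact Ideal.subset_span ⟨i, hi1, SetLike.coe_mem _⟩
      exact Submodule.subset_span ⟨_, haJ, k, hkK, rfl⟩
    · rw [decompose_homog_smul_homog_ne 𝒜 ℳ (SetLike.coe_mem _) hkd h]
      exact (idealSmul J K).zero_mem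
  refine le_antisymm ?_ ?_
  · rw [idealSmul, Submodule.span_le]
    rintro _ ⟨a, haJ, k, hkK, rfl⟩
    exact ⟨K.smul_mem a hkK, Submodule.subset_span ⟨a, haJ, k, trivial, rfl⟩⟩
  · rintro m ⟨hmK, hmJM⟩
    have hsum : m = ∑ j ∈ (DirectSum.decompose ℳ m).support,
        ((DirectSum.decompose ℳ m j : ℳ j) : M) :=
      (DirectSum.sum_support_decompose ℳ m).symm
    rw [hsum]
    refine Submodule.sum_mem _ fun j _ => ?_
    by_cases h : j ≤ d
    · rw [hJM hmJM j (by omega)]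
      exact (idealSmul J K).zero_mem
    · exact hkey j (by omega) _ (hKhom m hmK j) (SetLike.coe_mem _)
end
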